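/- arXiv:1107.5478 — 3 statements merged into one kernel-verified Lean document; each statement's English description precedes it below -/
import Mathlib

section
/- Let f : ℝ → ℝ be a convex function, integrable against both the density e^{-πx²} and the uniform density on [-1/2,1/2]. Then ∫ f(x) e^{-πx²} dx ≥ ∫_{-1/2}^{1/2} f(x) dx. -/
/-!
On `[-1/2, 1/2]` a convex function lies below its chord `ℓ` through the endpoints, and outside
it lies above. Since the Gaussian density is at most `1` everywhere, this gives pointwise
`1_{[-1/2,1/2]} (f - ℓ) ≤ (f - ℓ) e^{-πx²}`. Integrating, and noting that an affine function has
the same integral `ℓ(0)` against both densities (both have mass one and mean zero), proves the claim.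
-/

open MeasureTheory Real Set

theorem ConvexOn.exists_affine_ge_on_Icc_le_off_Icc {f : ℝ → ℝ} (hf : ConvexOn ℝ univ f)
    {a b : ℝ} (hab : a < b) :
    ∃ α β : ℝ, (∀ x ∈ Icc a b, f x ≤ α + β * x) ∧ ∀ x ∉ Icc a b, α + β * x ≤ f x := by
  -- The chord through `(a, f a)` and `(b, f b)`; every case compares secant slopes from `a`.
  set β := (f b - f a) / (b - a)
  have secant_le {x y : ℝ} (hx : x ≠ a) (hy : y ≠ a) (hxy : x ≤ y) :
      (f x - f a) / (x - a) ≤ (f y - f a) / (y - a) :=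
    hf.secant_mono (mem_univ a) (mem_univ x) (mem_univ y) hx hy hxy
  refine ⟨f a - β * a, β, fun x ⟨hax, hxb⟩ => ?_, fun x hx => ?_⟩
  · rcases hax.eq_or_lt with rfl | hax
    · linarith
    have h := secant_le hax.ne' hab.ne' hxb
    rw [div_le_iff₀ (sub_pos.2 hax)] at h
    linarith
  · rw [mem_Icc, not_and_or, not_le, not_le] at hx
    rcases hx with hxa | hbx
    · have h := secant_le hxa.ne hab.ne' (hxa.trans hab).le
      rw [div_le_iff_of_neg (sub_neg.2 hxa)] at h
      linarith
    · have h := secant_le hab.ne' (hab.trans hbx).ne' hbx.le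
      rw [le_div_iff₀ (sub_pos.2 (hab.trans hbx))] at h
      linarith

theorem integral_eq_zero_of_odd {G : Type*} [MeasurableSpace G] [AddGroup G] [MeasurableNeg G]
    {f : G → ℝ} (hf : Function.Odd f) (μ : Measure G) [μ.IsNegInvariant] : ∫ x, f x ∂μ = 0 := by
  have h := integral_neg_eq_self f μ
  simp only [hf _, integral_neg] at h
  exact neg_eq_self.1 h

theorem integral_mul_exp_neg_mul_sq (b : ℝ) : ∫ x : ℝ, x * exp (-b * x ^ 2) = 0 :=
  integral_eq_zero_of_odd (fun x => by simp only [neg_sq, neg_mul]) volume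

theorem integrable_affine_mul_exp_neg_mul_sq {b : ℝ} (hb : 0 < b) (α β : ℝ) :
    Integrable fun x : ℝ => (α + β * x) * exp (-b * x ^ 2) := by
  simp only [add_mul, mul_assoc]
  exact ((integrable_exp_neg_mul_sq hb).const_mul α).add
    ((integrable_mul_exp_neg_mul_sq hb).const_mul β)

theorem integral_affine_mul_exp_neg_mul_sq {b : ℝ} (hb : 0 < b) (α β : ℝ) :
    ∫ x : ℝ, (α + β * x) * exp (-b * x ^ 2) = α * √(π / b) := by
  simp only [add_mul, mul_assoc]
  rw [integral_add ((integrable_exp_neg_mul_sq hb).const_mul α)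
      ((integrable_mul_exp_neg_mul_sq hb).const_mul β),
    integral_const_mul, integral_const_mul, integral_gaussian, integral_mul_exp_neg_mul_sq,
    mul_zero, add_zero]

theorem setIntegral_Icc_neg_affine {r : ℝ} (hr : 0 ≤ r) (α β : ℝ) :
    ∫ x in Icc (-r) r, (α + β * x) = 2 * r * α := by
  rw [integral_Icc_eq_integral_Ioc, ← intervalIntegral.integral_of_le (by linarith),
    intervalIntegral.integral_add intervalIntegrable_const
      ((continuous_const_mul β).intervalIntegrable _ _),
    intervalIntegral.integral_const, intervalIntegral.integral_const_mul, integral_id]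
  simp only [smul_eq_mul]
  ring

theorem setIntegral_le_integral_mul {X : Type*} [MeasurableSpace X] {μ : Measure X} {s : Set X}
    {g w : X → ℝ} (hs : MeasurableSet s) (hg_int : IntegrableOn g s μ)
    (hgw_int : Integrable (fun x => g x * w x) μ) (hg_in : ∀ x ∈ s, g x ≤ 0)
    (hg_out : ∀ x ∉ s, 0 ≤ g x) (hw_in : ∀ x ∈ s, w x ≤ 1) (hw_out : ∀ x ∉ s, 0 ≤ w x) :
    ∫ x in s, g x ∂μ ≤ ∫ x, g x * w x ∂μ := by
  rw [← integral_indicator hs]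
  refine integral_mono (hg_int.integrable_indicator hs) hgw_int fun x => ?_
  by_cases hx : x ∈ s
  · rw [indicator_of_mem hx]
    nlinarith [hg_in x hx, hw_in x hx]
  · rw [indicator_of_notMem hx]
    exact mul_nonneg (hg_out x hx) (hw_out x hx)

theorem gaussian_dominates_uniform_for_convex_one_dim
    (f : ℝ → ℝ) (hf : ConvexOn ℝ Set.univ f)
    (hint1 : Integrable (fun x => f x * Real.exp (-Real.pi * x ^ 2)) volume)
    (hint2 : IntegrableOn f (Set.Icc (-(1:ℝ)/2) (1/2)) volume) :
    ∫ x, f x * Real.exp (-Real.pi * x ^ 2) ≥ ∫ x in Set.Icc (-(1:ℝ)/2) (1/2), f x := by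
  obtain ⟨α, β, h_in, h_out⟩ :=
    hf.exists_affine_ge_on_Icc_le_off_Icc (show -(1:ℝ)/2 < 1/2 by norm_num)
  have hℓ_gauss := integrable_affine_mul_exp_neg_mul_sq pi_pos α β
  have hℓ_Icc : IntegrableOn (fun x => α + β * x) (Icc (-(1:ℝ)/2) (1/2)) :=
    (by fun_prop : Continuous fun x : ℝ => α + β * x).integrableOn_Icc
  have key := setIntegral_le_integral_mul (g := fun x => f x - (α + β * x))
    (w := fun x => exp (-π * x ^ 2)) measurableSet_Icc (hint2.sub hℓ_Icc)
    (by simp only [sub_mul]; exact hint1.sub hℓ_gauss)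
    (fun x hx => sub_nonpos.2 (h_in x hx)) (fun x hx => sub_nonneg.2 (h_out x hx))
    (fun x _ => exp_le_one_iff.2 (by nlinarith [pi_pos, sq_nonneg x]))
    (fun x _ => (exp_pos _).le)
  simp only [sub_mul] at key
  rw [integral_sub hint2 hℓ_Icc, integral_sub hint1 hℓ_gauss, integral_affine_mul_exp_neg_mul_sq
    pi_pos, div_self pi_pos.ne', sqrt_one, neg_div, setIntegral_Icc_neg_affine (by norm_num)] at key
  linarith
end

section
/- Let A, B ⊆ ℝⁿ be centrally symmetric convex bodies. Then the covering number N(A,B) satisfies N(A,B) ≤ 3ⁿ · vol(A) / vol(A ∩ B), where N(A,B) is the minimum number of translates of B needed to cover A. -/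
open MeasureTheory Set Pointwise Module

open scoped ENNReal

/-! Put `C = A ∩ B` and `D = ½ C`. Take a family `Λ ⊆ A`, maximal among those whose translates
`x + D` are pairwise disjoint. These translates lie in `A + ½ A = (3/2) A`, so comparing volumes
gives `|Λ| (1/2)ⁿ vol C ≤ (3/2)ⁿ vol A`, which also shows that a maximal family exists. By
maximality every `a ∈ A` has `a + D` meeting some `x + D`, hence `a ∈ x + (D - D) = x + C`. -/

theorem Finset.exists_forall_card_le_of_bddAbove {α : Type*} {p : Finset α → Prop}
    (hp : {s | p s}.Nonempty) (hbdd : BddAbove (Finset.card '' {s | p s})) :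
    ∃ s, p s ∧ ∀ t, p t → t.card ≤ s.card := by
  obtain ⟨s, hs, hcard⟩ := Nat.sSup_mem (hp.image card) hbdd
  exact ⟨s, hs, fun t ht => hcard ▸ le_csSup hbdd (Set.mem_image_of_mem _ ht)⟩

section Packing

variable {G : Type*} [AddGroup G]

def IsVAddPacking (D A : Set G) (S : Finset G) : Prop :=
  (S : Set G) ⊆ A ∧ (S : Set G).PairwiseDisjoint (· +ᵥ D)

theorem exists_isVAddPacking_forall_not_disjoint {D A : Set G}
    (hbdd : BddAbove (Finset.card '' {S | IsVAddPacking D A S})) :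
    ∃ S, IsVAddPacking D A S ∧
      ∀ a ∈ A, a ∉ S → ∃ x ∈ S, ¬Disjoint (a +ᵥ D) (x +ᵥ D) := by
  classical
  obtain ⟨S, hS, hmax⟩ :=
    Finset.exists_forall_card_le_of_bddAbove ⟨∅, by simp [IsVAddPacking]⟩ hbdd
  refine ⟨S, hS, fun a ha haS => ?_⟩
  by_contra! hdisj
  have hins : IsVAddPacking D A (insert a S) := by
    refine ⟨?_, ?_⟩
    · simpa [Finset.coe_insert] using insert_subset ha hS.1
    · rw [Finset.coe_insert]
      exact hS.2.insert fun x hx _ => hdisj x hx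
  have hcard := hmax _ hins
  rw [Finset.card_insert_of_notMem haS] at hcard
  omega

theorem subset_biUnion_vadd_sub_of_forall_not_disjoint {D A : Set G} {S : Finset G}
    (hD : D.Nonempty)
    (hmax : ∀ a ∈ A, a ∉ S → ∃ x ∈ S, ¬Disjoint (a +ᵥ D) (x +ᵥ D)) :
    A ⊆ ⋃ x ∈ S, x +ᵥ (D - D) := by
  intro a ha
  by_cases haS : a ∈ S
  · obtain ⟨d, hd⟩ := hD
    exact mem_biUnion haS ⟨0, ⟨d, hd, d, hd, sub_self d⟩, add_zero a⟩
  obtain ⟨x, hxS, hnd⟩ := hmax a ha haS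
  obtain ⟨_, ⟨d₁, hd₁, rfl⟩, d₂, hd₂, hz⟩ := not_disjoint_iff.mp hnd
  refine mem_biUnion hxS ⟨d₂ - d₁, ⟨d₂, hd₂, d₁, hd₁, rfl⟩, ?_⟩
  simp only [vadd_eq_add] at hz ⊢
  rw [← add_sub_assoc, hz, add_sub_cancel_right]

section Measure

variable [MeasurableSpace G] [MeasurableAdd G] {μ : Measure G} [μ.IsAddLeftInvariant]
  {D A K : Set G}

theorem IsVAddPacking.card_mul_measure_le {S : Finset G} (hS : IsVAddPacking D A S)
    (hD : NullMeasurableSet D μ) (hK : ∀ x ∈ A, x +ᵥ D ⊆ K) :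
    S.card * μ D ≤ μ K :=
  calc S.card * μ D = ∑ x ∈ S, μ (x +ᵥ D) := by simp
    _ = μ (⋃ x ∈ S, x +ᵥ D) :=
      (measure_biUnion_finset₀ hS.2.aedisjoint fun x _ => hD.vadd x).symm
    _ ≤ μ K := measure_mono <| iUnion₂_subset fun x hx => hK x (hS.1 hx)

theorem bddAbove_card_isVAddPacking (hD : NullMeasurableSet D μ) (hμD : μ D ≠ 0)
    (hμK : μ K ≠ ∞) (hK : ∀ x ∈ A, x +ᵥ D ⊆ K) :
    BddAbove (Finset.card '' {S | IsVAddPacking D A S}) := by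
  obtain ⟨N, hN⟩ := ENNReal.exists_nat_gt (ENNReal.div_ne_top hμK hμD)
  refine ⟨N, ?_⟩
  rintro _ ⟨S, hS, rfl⟩
  have hS_le : (S.card : ℝ≥0∞) ≤ μ K / μ D :=
    (ENNReal.le_div_iff_mul_le (.inl hμD) (.inr hμK)).2 (hS.card_mul_measure_le hD hK)
  exact_mod_cast hS_le.trans hN.le

end Measure

end Packing

theorem Convex.half_smul_sub_half_smul {E : Type*} [AddCommGroup E] [Module ℝ E] {C : Set E}
    (hC : Convex ℝ C) (hCs : -C = C) : (2⁻¹ : ℝ) • C - (2⁻¹ : ℝ) • C = C := by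
  rw [sub_eq_add_neg, ← smul_set_neg, hCs, hC.add_half_self_eq_self]

variable {E : Type*} [NormedAddCommGroup E] [NormedSpace ℝ E] [MeasurableSpace E] [BorelSpace E]
  [FiniteDimensional ℝ E] (μ : Measure E) [μ.IsAddHaarMeasure]

theorem Convex.exists_finset_cover_vadd_card_mul_measure_inter_le {A B : Set E}
    (hA : Convex ℝ A) (hAs : -A = A) (hB : Convex ℝ B) (hBs : -B = B) (hA_fin : μ A ≠ ∞)
    (hAB : μ (A ∩ B) ≠ 0) :
    ∃ Λ : Finset E, A ⊆ ⋃ x ∈ Λ, x +ᵥ B ∧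
      (Λ.card : ℝ≥0∞) * μ (A ∩ B) ≤ 3 ^ finrank ℝ E * μ A := by
  set C := A ∩ B
  set D := (2⁻¹ : ℝ) • C
  set K := (3 / 2 : ℝ) • A
  have hC : Convex ℝ C := hA.inter hB
  have hDD : D - D ⊆ B := by
    rw [hC.half_smul_sub_half_smul (by rw [Set.inter_neg, hAs, hBs])]
    exact inter_subset_right
  have hDK : ∀ x ∈ A, x +ᵥ D ⊆ K := fun x hx =>
    calc x +ᵥ D ⊆ A + D := vadd_set_subset_add hx
      _ ⊆ A + (2⁻¹ : ℝ) • A := add_subset_add_left (smul_set_mono inter_subset_left)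
      _ = (1 + 2⁻¹ : ℝ) • A := by rw [hA.add_smul zero_le_one (by norm_num), one_smul]
      _ = K := by norm_num [K]
  have hμC : μ C = ENNReal.ofReal (2 ^ finrank ℝ E) * μ D := by
    rw [← Measure.addHaar_smul_of_nonneg μ zero_le_two, smul_smul]; norm_num
  have hμD : μ D ≠ 0 := right_ne_zero_of_mul (hμC ▸ hAB)
  have hμK : μ K ≠ ∞ := by
    rw [Measure.addHaar_smul_of_nonneg μ (by norm_num)]
    exact ENNReal.mul_ne_top ENNReal.ofReal_ne_top hA_fin
  have hD : NullMeasurableSet D μ := (hC.smul _).nullMeasurableSet μ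
  obtain ⟨S, hS, hmax⟩ :=
    exists_isVAddPacking_forall_not_disjoint (bddAbove_card_isVAddPacking hD hμD hμK hDK)
  refine ⟨S, ?_, ?_⟩
  · exact (subset_biUnion_vadd_sub_of_forall_not_disjoint (nonempty_of_measure_ne_zero hμD)
      hmax).trans (biUnion_mono subset_rfl fun x _ => vadd_set_mono hDD)
  · calc (S.card : ℝ≥0∞) * μ C = ENNReal.ofReal (2 ^ finrank ℝ E) * (S.card * μ D) := by
          rw [hμC]; ring
      _ ≤ ENNReal.ofReal (2 ^ finrank ℝ E) * μ K := by
          gcongr; exact hS.card_mul_measure_le hD hDK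
      _ = 3 ^ finrank ℝ E * μ A := by
          rw [Measure.addHaar_smul_of_nonneg μ (by norm_num), ← mul_assoc,
            ← ENNReal.ofReal_mul (by positivity), ← mul_pow]
          norm_num

theorem covering_number_volume_bound_general
    (n : ℕ) (A B : Set (EuclideanSpace ℝ (Fin n)))
    (hA : Convex ℝ A) (hAc : IsCompact A) (hA0 : (0 : EuclideanSpace ℝ (Fin n)) ∈ interior A)
    (hAs : A = -A)
    (hB : Convex ℝ B) (hB0 : (0 : EuclideanSpace ℝ (Fin n)) ∈ interior B)
    (hBs : B = -B) :
    ∃ Λ : Finset (EuclideanSpace ℝ (Fin n)),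
      (A ⊆ ⋃ x ∈ Λ, (x +ᵥ B)) ∧
      (Λ.card : ENNReal) * volume (A ∩ B) ≤ 3 ^ n * volume A := by
  have hAB : volume (A ∩ B) ≠ 0 :=
    (Measure.measure_pos_of_nonempty_interior volume
      ⟨0, by rw [interior_inter]; exact ⟨hA0, hB0⟩⟩).ne'
  simpa only [finrank_euclideanSpace_fin] using
    hA.exists_finset_cover_vadd_card_mul_measure_inter_le volume hAs.symm hB hBs.symm
      hAc.measure_lt_top.ne hAB

theorem covering_number_volume_bound
    (n : ℕ) (A B : Set (EuclideanSpace ℝ (Fin n)))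
    (hA : Convex ℝ A) (hAc : IsCompact A) (hA0 : (0 : EuclideanSpace ℝ (Fin n)) ∈ interior A)
    (hAs : A = -A)
    (hB : Convex ℝ B) (hBc : IsCompact B) (hB0 : (0 : EuclideanSpace ℝ (Fin n)) ∈ interior B)
    (hBs : B = -B) :
    ∃ Λ : Finset (EuclideanSpace ℝ (Fin n)),
      (A ⊆ ⋃ x ∈ Λ, (x +ᵥ B)) ∧
      (Λ.card : ENNReal) * volume (A ∩ B) ≤ 3 ^ n * volume A :=
  covering_number_volume_bound_general n A B hA hAc hA0 hAs hB hB0 hBs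
end

section
/- Let K ⊆ ℝⁿ be a centrally symmetric convex body, and suppose an ellipsoid E satisfies vol(E ∩ K) ≥ vol(E)/2 and vol(K) ≤ Cⁿ·vol(E ∩ K) for some C ≥ 1. Then N(K,E) ≤ (3C)ⁿ and N(E,K) ≤ 2·3ⁿ, where N(A,B) is the minimal number of translates of B needed to cover A. -/
/-!
Let `D ⊆ A` be convex bodies with `D` centrally symmetric and `A` convex. If `Λ ⊆ A` is a maximal
set of centres for which the translates `x + ½ D` are pairwise disjoint, then the translates
`x + D` cover `A`: a further point `a` would have `a + ½ D` meeting some `x + ½ D`, and then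
`a - x ∈ ½ D - ½ D = D`. The disjoint translates all lie in `A + ½ A = (3/2) A`, so
`#Λ · vol(D) ≤ 3ⁿ · vol(A)`. With `D = E ∩ K` and `A = K`, resp. `A = E`, the two volume
hypotheses turn this into the bounds `(3C)ⁿ` and `2 · 3ⁿ`.
-/

open MeasureTheory Set Pointwise

open Finset in
theorem Finset.exists_card_maximal {α : Type*} {P : Finset α → Prop} {s₀ : Finset α} (h₀ : P s₀)
    {N : ℕ} (hN : ∀ s, P s → #s ≤ N) : ∃ s, P s ∧ ∀ t, P t → #t ≤ #s := by
  obtain ⟨s, hs, hmin⟩ :=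
    (InvImage.wf (fun s : Finset α => N - #s) wellFounded_lt).has_min {s | P s} ⟨s₀, h₀⟩
  refine ⟨s, hs, fun t ht => ?_⟩
  have hts : ¬ N - #t < N - #s := hmin t ht
  have ht := hN t ht
  omega

section Packing

open Finset

variable {V : Type*} [AddCommGroup V] {A B D : Set V} {Λ : Finset V}

def IsPacking (A B : Set V) (Λ : Finset V) : Prop :=
  ↑Λ ⊆ A ∧ (Λ : Set V).PairwiseDisjoint (· +ᵥ B)

theorem isPacking_empty : IsPacking A B ∅ := by
  simp [IsPacking]

theorem IsPacking.insert [DecidableEq V] (hΛ : IsPacking A B Λ) {a : V} (ha : a ∈ A)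
    (hdisj : ∀ x ∈ Λ, Disjoint (a +ᵥ B) (x +ᵥ B)) : IsPacking A B (insert a Λ) := by
  rw [IsPacking, coe_insert]
  exact ⟨insert_subset ha hΛ.1, hΛ.2.insert fun x hx _ => hdisj x hx⟩

variable [Module ℝ V]

theorem Convex.sub_mem_of_mem_half_smul (hD : Convex ℝ D) (hDs : -D = D) {u v : V}
    (hu : u ∈ (2⁻¹ : ℝ) • D) (hv : v ∈ (2⁻¹ : ℝ) • D) : u - v ∈ D := by
  obtain ⟨d, hd, rfl⟩ := hu
  obtain ⟨e, he, rfl⟩ := hv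
  have hne : -e ∈ D := hDs ▸ neg_mem_neg.2 he
  simpa [sub_eq_add_neg] using hD hd hne (by norm_num) (by norm_num) (by norm_num)

theorem IsPacking.subset_biUnion_vadd_of_card_maximal (hD : Convex ℝ D) (hDs : -D = D)
    (hDne : D.Nonempty) (hΛ : IsPacking A ((2⁻¹ : ℝ) • D) Λ)
    (hmax : ∀ Λ', IsPacking A ((2⁻¹ : ℝ) • D) Λ' → #Λ' ≤ #Λ) : A ⊆ ⋃ x ∈ Λ, x +ᵥ D := by
  classical
  intro a ha
  by_contra hcov
  simp only [mem_iUnion, not_exists] at hcov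
  have hdisj : ∀ x ∈ Λ, Disjoint (a +ᵥ (2⁻¹ : ℝ) • D) (x +ᵥ (2⁻¹ : ℝ) • D) := by
    refine fun x hx => Set.disjoint_left.2 ?_
    rintro _ ⟨u, hu, rfl⟩ ⟨v, hv, hvu⟩
    refine hcov x hx ⟨v - u, hD.sub_mem_of_mem_half_smul hDs hv hu, ?_⟩
    simp only [vadd_eq_add] at hvu ⊢
    rw [← add_sub_assoc, hvu, add_sub_cancel_right]
  have haΛ : a ∉ Λ := fun h =>
    ((hDne.smul_set (a := (2⁻¹ : ℝ))).vadd_set (a := a)).ne_empty (disjoint_self.1 (hdisj a h))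
  have hcard := hmax _ (hΛ.insert ha hdisj)
  rw [card_insert_of_notMem haΛ] at hcard
  omega

end Packing

section Volume

open Finset

variable {V : Type*} [NormedAddCommGroup V] [NormedSpace ℝ V] [MeasurableSpace V] [BorelSpace V]
  [FiniteDimensional ℝ V] (μ : Measure V) [μ.IsAddHaarMeasure] {A B D : Set V} {Λ : Finset V}

theorem IsPacking.card_mul_measure_le (hA : Convex ℝ A) (hD : Convex ℝ D) (hDA : D ⊆ A)
    (hΛ : IsPacking A ((2⁻¹ : ℝ) • D) Λ) :
    #Λ * μ D ≤ ENNReal.ofReal (3 ^ Module.finrank ℝ V) * μ A := by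
  have hunion : ⋃ x ∈ Λ, x +ᵥ (2⁻¹ : ℝ) • D ⊆ (3 / 2 : ℝ) • A := by
    rw [show (3 / 2 : ℝ) = 1 + 2⁻¹ by norm_num, hA.add_smul zero_le_one (by norm_num), one_smul]
    exact iUnion₂_subset fun x hx =>
      vadd_set_subset_iff.2 fun u hu => add_mem_add (hΛ.1 hx) (smul_set_mono hDA hu)
  have hvol : #Λ * μ ((2⁻¹ : ℝ) • D) ≤ μ ((3 / 2 : ℝ) • A) := by
    calc #Λ * μ ((2⁻¹ : ℝ) • D) = μ (⋃ x ∈ Λ, x +ᵥ (2⁻¹ : ℝ) • D) := by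
          rw [measure_biUnion_finset₀ hΛ.2.aedisjoint fun x _ =>
            ((hD.smul _).vadd x).nullMeasurableSet μ]
          simp [measure_vadd]
      _ ≤ _ := measure_mono hunion
  calc #Λ * μ D = #Λ * μ ((2 : ℝ) • (2⁻¹ : ℝ) • D) := by
        rw [smul_smul, mul_inv_cancel₀ two_ne_zero, one_smul]
    _ = ENNReal.ofReal (2 ^ Module.finrank ℝ V) * (#Λ * μ ((2⁻¹ : ℝ) • D)) := by
        rw [Measure.addHaar_smul_of_nonneg μ zero_le_two]; ring
    _ ≤ ENNReal.ofReal (2 ^ Module.finrank ℝ V) * μ ((3 / 2 : ℝ) • A) := by gcongr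
    _ = ENNReal.ofReal (3 ^ Module.finrank ℝ V) * μ A := by
        rw [← Measure.addHaar_smul_of_nonneg μ zero_le_two, smul_smul,
          Measure.addHaar_smul_of_nonneg μ (by norm_num)]
        norm_num

theorem exists_finset_subset_biUnion_vadd_card_mul_le (hA : Convex ℝ A) (hAfin : μ A ≠ ⊤)
    (hD : Convex ℝ D) (hDs : -D = D) (hDA : D ⊆ A) (hD0 : μ D ≠ 0) :
    ∃ Λ : Finset V, A ⊆ ⋃ x ∈ Λ, x +ᵥ D ∧
      #Λ * μ D ≤ ENNReal.ofReal (3 ^ Module.finrank ℝ V) * μ A := by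
  have hDfin : μ D ≠ ⊤ := ((measure_mono hDA).trans_lt hAfin.lt_top).ne
  set c := ENNReal.ofReal (3 ^ Module.finrank ℝ V) * μ A / μ D
  have hc : c ≠ ⊤ := ENNReal.div_ne_top (ENNReal.mul_ne_top ENNReal.ofReal_ne_top hAfin) hD0
  have hbound : ∀ Λ, IsPacking A ((2⁻¹ : ℝ) • D) Λ → #Λ ≤ ⌊c.toReal⌋₊ := fun Λ hΛ =>
    Nat.le_floor <| by
      have hle : (#Λ : ENNReal) ≤ c := (ENNReal.le_div_iff_mul_le (.inl hD0) (.inl hDfin)).2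
        (hΛ.card_mul_measure_le μ hA hD hDA)
      simpa using ENNReal.toReal_mono hc hle
  obtain ⟨Λ, hΛ, hmax⟩ := Finset.exists_card_maximal (isPacking_empty (A := A)) hbound
  exact ⟨Λ, hΛ.subset_biUnion_vadd_of_card_maximal hD hDs (nonempty_of_measure_ne_zero hD0) hmax,
    hΛ.card_mul_measure_le μ hA hD hDA⟩

theorem exists_finset_subset_biUnion_vadd_card_le (hA : Convex ℝ A) (hB : Convex ℝ B)
    (hAs : -A = A) (hBs : -B = B) (hAfin : μ A ≠ ⊤) (hAB : μ (A ∩ B) ≠ 0) {c : ℝ} (hc : 0 ≤ c)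
    (hvol : ENNReal.ofReal (3 ^ Module.finrank ℝ V) * μ A ≤ ENNReal.ofReal c * μ (A ∩ B)) :
    ∃ Λ : Finset V, A ⊆ ⋃ x ∈ Λ, x +ᵥ B ∧ (#Λ : ℝ) ≤ c := by
  obtain ⟨Λ, hcov, hcard⟩ := exists_finset_subset_biUnion_vadd_card_mul_le μ hA hAfin (hA.inter hB)
    (by rw [inter_neg, hAs, hBs]) inter_subset_left hAB
  refine ⟨Λ, hcov.trans (biUnion_mono subset_rfl fun _ _ => vadd_set_mono inter_subset_right), ?_⟩
  have hABfin : μ (A ∩ B) ≠ ⊤ := ((measure_mono inter_subset_left).trans_lt hAfin.lt_top).ne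
  rw [← ENNReal.ofReal_le_ofReal_iff hc, ENNReal.ofReal_natCast,
    ← ENNReal.mul_le_mul_iff_left hAB hABfin]
  exact hcard.trans hvol

end Volume

namespace ContinuousLinearEquiv

variable {V W : Type*} [NormedAddCommGroup V] [NormedSpace ℝ V] [NormedAddCommGroup W]
  [NormedSpace ℝ W] (T : V ≃L[ℝ] W) {r : ℝ}

theorem neg_image_closedBall_zero : -(T '' Metric.closedBall 0 r) = T '' Metric.closedBall 0 r := by
  rw [← image_neg, neg_closedBall, neg_zero]

theorem measure_image_closedBall_zero_pos [MeasurableSpace W] (μ : Measure W) [μ.IsOpenPosMeasure]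
    (hr : 0 < r) : 0 < μ (T '' Metric.closedBall 0 r) :=
  ((T.isOpenMap _ Metric.isOpen_ball).measure_pos μ ⟨0, 0, Metric.mem_ball_self hr, map_zero T⟩
    ).trans_le (measure_mono (image_mono Metric.ball_subset_closedBall))

end ContinuousLinearEquiv

theorem covering_from_volume_estimates_general
    (n : ℕ) (K E : Set (EuclideanSpace ℝ (Fin n)))
    (hK : Convex ℝ K) (hKc : IsCompact K)
    (hKs : K = -K)
    (T : EuclideanSpace ℝ (Fin n) ≃L[ℝ] EuclideanSpace ℝ (Fin n))
    (hE : E = T '' Metric.closedBall 0 1)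
    (C : ℝ) (hC : 1 ≤ C)
    (hvol1 : volume (E ∩ K) ≥ volume E / 2)
    (hvol2 : volume K ≤ (ENNReal.ofReal C) ^ n * volume (E ∩ K)) :
    (∃ Λ : Finset (EuclideanSpace ℝ (Fin n)),
      (K ⊆ ⋃ x ∈ Λ, (x +ᵥ E)) ∧ (Λ.card : ℝ) ≤ (3 * C) ^ n) ∧
    (∃ Λ : Finset (EuclideanSpace ℝ (Fin n)),
      (E ⊆ ⋃ x ∈ Λ, (x +ᵥ K)) ∧ (Λ.card : ℝ) ≤ 2 * 3 ^ n) := by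
  have hEc : IsCompact E := hE ▸ (isCompact_closedBall 0 1).image T.continuous
  have hEconv : Convex ℝ E :=
    hE ▸ (convex_closedBall 0 1).linear_image T.toLinearEquiv.toLinearMap
  have hEs : -E = E := hE ▸ T.neg_image_closedBall_zero
  have hEpos : 0 < volume E := hE ▸ T.measure_image_closedBall_zero_pos volume one_pos
  have hEK : volume E ≤ 2 * volume (E ∩ K) := by
    rw [mul_comm]
    exact (ENNReal.div_le_iff_le_mul (.inl two_ne_zero) (.inl ENNReal.ofNat_ne_top)).1 hvol1
  have hEK0 : volume (E ∩ K) ≠ 0 :=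
    ((ENNReal.div_pos hEpos.ne' ENNReal.ofNat_ne_top).trans_le hvol1).ne'
  refine ⟨exists_finset_subset_biUnion_vadd_card_le volume hK hEconv hKs.symm hEs
      hKc.measure_lt_top.ne (by rwa [inter_comm]) (by positivity) ?_,
    exists_finset_subset_biUnion_vadd_card_le volume hEconv hK hEs hKs.symm
      hEc.measure_lt_top.ne hEK0 (by positivity) ?_⟩
  · rw [inter_comm, finrank_euclideanSpace_fin]
    calc ENNReal.ofReal (3 ^ n) * volume K
        ≤ ENNReal.ofReal (3 ^ n) * (ENNReal.ofReal C ^ n * volume (E ∩ K)) := by gcongr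
      _ = ENNReal.ofReal ((3 * C) ^ n) * volume (E ∩ K) := by
        rw [← ENNReal.ofReal_pow (by linarith), ← mul_assoc, ← ENNReal.ofReal_mul (by positivity),
          mul_pow]
  · rw [finrank_euclideanSpace_fin]
    calc ENNReal.ofReal (3 ^ n) * volume E ≤ ENNReal.ofReal (3 ^ n) * (2 * volume (E ∩ K)) := by
          gcongr
      _ = ENNReal.ofReal (2 * 3 ^ n) * volume (E ∩ K) := by
        rw [ENNReal.ofReal_mul zero_le_two, ENNReal.ofReal_ofNat]; ring

theorem covering_from_volume_estimates
    (n : ℕ) (K E : Set (EuclideanSpace ℝ (Fin n)))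
    (hK : Convex ℝ K) (hKc : IsCompact K)
    (hK0 : (0 : EuclideanSpace ℝ (Fin n)) ∈ interior K) (hKs : K = -K)
    (T : EuclideanSpace ℝ (Fin n) ≃L[ℝ] EuclideanSpace ℝ (Fin n))
    (hE : E = T '' Metric.closedBall 0 1)
    (C : ℝ) (hC : 1 ≤ C)
    (hvol1 : volume (E ∩ K) ≥ volume E / 2)
    (hvol2 : volume K ≤ (ENNReal.ofReal C) ^ n * volume (E ∩ K)) :
    (∃ Λ : Finset (EuclideanSpace ℝ (Fin n)),
      (K ⊆ ⋃ x ∈ Λ, (x +ᵥ E)) ∧ (Λ.card : ℝ) ≤ (3 * C) ^ n) ∧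
    (∃ Λ : Finset (EuclideanSpace ℝ (Fin n)),
      (E ⊆ ⋃ x ∈ Λ, (x +ᵥ K)) ∧ (Λ.card : ℝ) ≤ 2 * 3 ^ n) :=
  covering_from_volume_estimates_general n K E hK hKc hKs T hE C hC hvol1 hvol2
end
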